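/- The forgetful functor U : Lens → Cat both preserves and reflects monomorphisms; that is, a lens F : A → B is a monomorphism in the category Lens if and only if its get functor U F is a monomorphism in the category Cat of small categories and functors. -/

import Mathlib

universe u

open CategoryTheory CategoryTheory.Limits

namespace LensPaper

section OutDefs

variable {A : Type*} [Category A] {B : Type*} [Category B] {C : Type*} [Category C]

/-- The "out-set" of an object: the collection of all morphisms out of `X`,
bundled with their targets. -/
def Out (X : A) : Type _ := Σ Y : A, X ⟶ Y

/-- The identity element of an out-set. -/
def Out.id (X : A) : Out X := ⟨X, 𝟙 X⟩

/-- Composition of a morphism out of `X` with a morphism out of its target. -/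
def Out.comp {X : A} (u : Out X) (v : Out u.1) : Out X := ⟨v.1, u.2 ≫ v.2⟩

/-- Transport of out-sets along an equality of objects. -/
def Out.cast {X Y : A} (h : X = Y) (u : Out X) : Out Y := ⟨u.1, eqToHom h.symm ≫ u.2⟩

@[simp] theorem Out.cast_rfl {X : A} (u : Out X) : Out.cast rfl u = u := by
  cases u; simp [Out.cast] <;> rfl

theorem Out.cast_cast {X Y Z : A} (h₁ : X = Y) (h₂ : Y = Z) (u : Out X) :
    Out.cast h₂ (Out.cast h₁ u) = Out.cast (h₁.trans h₂) u := by
  subst h₁; subst h₂; simp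

/-- The action of a functor on out-sets. -/
def mapOut (F : A ⥤ B) {X : A} (u : Out X) : Out (F.obj X) := ⟨F.obj u.1, F.map u.2⟩

theorem mapOut_cast (F : A ⥤ B) {X Y : A} (h : X = Y) (u : Out X) :
    mapOut F (Out.cast h u) = Out.cast (congrArg F.obj h) (mapOut F u) := by
  subst h; simp

/-- The set of all morphisms of a category, bundled with their endpoints. -/
def Mor (A : Type*) [Category A] : Type _ := Σ (X Y : A), X ⟶ Y

/-- The action of a functor on morphisms, as a function on bundled morphisms. -/
def mapMor (F : A ⥤ B) : Mor A → Mor B := fun m => ⟨F.obj m.1, F.obj m.2.1, F.map m.2.2⟩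

/-- The set of composable pairs of morphisms of a category. -/
def CompPair (A : Type*) [Category A] : Type _ := Σ (X Y Z : A), (X ⟶ Y) × (Y ⟶ Z)

/-- The action of a functor on composable pairs. -/
def mapCompPair (F : A ⥤ B) : CompPair A → CompPair B :=
  fun p => ⟨F.obj p.1, F.obj p.2.1, F.obj p.2.2.1, (F.map p.2.2.2.1, F.map p.2.2.2.2)⟩

/-- A functor is a discrete opfibration if every morphism out of `F.obj X`
has a unique lift to a morphism out of `X`. -/
def IsDiscreteOpfibration (F : A ⥤ B) : Prop :=
  ∀ (X : A) (u : Out (F.obj X)), ∃! v : Out X, mapOut F v = u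

/-- A cosieve is an injective-on-objects discrete opfibration. -/
def IsCosieve (F : A ⥤ B) : Prop :=
  IsDiscreteOpfibration F ∧ Function.Injective F.obj

end OutDefs

/-- An (asymmetric delta) lens: a get functor together with put functions
satisfying PutGet, PutId and PutPut. -/
structure DLens (A : Type*) (B : Type*) [Category A] [Category B] where
  get : A ⥤ B
  put : ∀ (X : A), Out (get.obj X) → Out X
  putGet : ∀ (X : A) (u : Out (get.obj X)), mapOut get (put X u) = u
  putId : ∀ (X : A), put X (Out.id (get.obj X)) = Out.id X
  putPut : ∀ (X : A) (u : Out (get.obj X)) (v : Out u.1) (h : u.1 = get.obj (put X u).1),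
      put X (u.comp v) = (put X u).comp (put (put X u).1 (Out.cast h v))

namespace DLens

variable {A : Type*} [Category A] {B : Type*} [Category B] {C : Type*} [Category C]

theorem put_cast (F : DLens A B) {X₁ X₂ : A} (e : X₁ = X₂) (u : Out (F.get.obj X₁)) :
    Out.cast e (F.put X₁ u) = F.put X₂ (Out.cast (congrArg F.get.obj e) u) := by
  subst e; simp

/-- The identity lens. -/
def id (A : Type*) [Category A] : DLens A A where
  get := Functor.id A
  put X u := u
  putGet X u := rfl
  putId X := rfl
  putPut X u v h := by
    have hv : Out.cast h v = v := Out.cast_rfl v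
    rw [hv]

/-- Composition of lenses. -/
def comp (F : DLens A B) (G : DLens B C) : DLens A C where
  get := F.get ⋙ G.get
  put X u := F.put X (G.put (F.get.obj X) u)
  putGet X u := by
    show mapOut G.get (mapOut F.get (F.put X (G.put (F.get.obj X) u))) = u
    rw [F.putGet, G.putGet]
  putId X := by
    show F.put X (G.put (F.get.obj X) (Out.id (G.get.obj (F.get.obj X)))) = Out.id X
    rw [G.putId, F.putId]
  putPut X u v h := by
    have h₁ : u.1 = G.get.obj (G.put (F.get.obj X) u).1 :=
      (congrArg Sigma.fst (G.putGet (F.get.obj X) u)).symm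
    show F.put X (G.put (F.get.obj X) (u.comp v)) = _
    rw [G.putPut (F.get.obj X) u v h₁]
    have h₂ : (G.put (F.get.obj X) u).1 =
        F.get.obj (F.put X (G.put (F.get.obj X) u)).1 :=
      (congrArg Sigma.fst (F.putGet X (G.put (F.get.obj X) u))).symm
    rw [F.putPut X (G.put (F.get.obj X) u) _ h₂]
    rw [put_cast G h₂, Out.cast_cast]

end DLens

/-- The category of small categories and (asymmetric delta) lenses. -/
def LensCat : Type (u + 1) := Cat.{u, u}

/-- Regard a small category as an object of the category of lenses. -/
def LensCat.of (C : Cat.{u, u}) : LensCat.{u} := C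

/-- The underlying small category of an object of the category of lenses. -/
def LensCat.toCat (A : LensCat.{u}) : Cat.{u, u} := A

instance : Category.{u} LensCat.{u} where
  Hom A B := DLens A.toCat B.toCat
  id A := DLens.id A.toCat
  comp F G := F.comp G
  id_comp F := rfl
  comp_id F := rfl
  assoc F G H := rfl

/-- The get functor of a lens, i.e. a morphism of `LensCat` regarded as a `DLens`. -/
def LensCat.get {A B : LensCat.{u}} (F : A ⟶ B) : A.toCat ⟶ B.toCat := (DLens.get F).toCatHom

/-- The identity-on-objects forgetful functor from the category of lenses to the
category of small categories and functors, sending a lens to its get functor. -/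
def lensForget : LensCat.{u} ⥤ Cat.{u, u} where
  obj A := A.toCat
  map F := (DLens.get F).toCatHom
  map_id A := rfl
  map_comp F G := rfl

end LensPaper
open CategoryTheory CategoryTheory.Limits LensPaper

/-!
Let `K` be the kernel pair of the get functor of a lens `F : A → B`, with objects the pairs
`(X₁, X₂)` such that `F X₁ = F X₂`. Its two projections are the get functors of lenses
`fst, snd : K → A`: the put of `fst` sends `a : X₁ → Y₁` to `(a, φ_{X₂}(F a))`, and
symmetrically for `snd`. PutGet makes `fst ≫ F = snd ≫ F` in `Lens`.

If `F` is mono in `Lens`, then `fst = snd`, and since any two functors `P, Q` with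
`P ⋙ F = Q ⋙ F` factor as `fst` and `snd` through `K`, they coincide. Conversely, if the get
functor is mono in `Cat`, the two projection functors out of `K` agree, which makes `F`
injective on morphisms out of each object. By PutGet, `φ_X (F v) = v`, so the puts of lenses
`G, H` can be read off from those of `G ≫ F = H ≫ F`.
-/

universe v w

namespace LensPaper

section Out

variable {A : Type*} [Category A] {B : Type*} [Category B]

theorem Out.ext {X : A} {u v : Out X} (h : u.1 = v.1) (h₂ : u.2 ≫ eqToHom h = v.2) :
    u = v := by
  obtain ⟨U, f⟩ := u
  obtain ⟨V, g⟩ := v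
  dsimp at h h₂
  subst h
  simp only [eqToHom_refl, Category.comp_id] at h₂
  rw [h₂]

theorem Out.cast_eq_iff {X Y : A} (h : X = Y) (u : Out X) (v : Out Y) :
    Out.cast h u = v ↔ ∃ e : u.1 = v.1, u.2 ≫ eqToHom e = eqToHom h ≫ v.2 := by
  subst h
  simp only [Out.cast_rfl, eqToHom_refl, Category.id_comp]
  exact ⟨fun huv => huv ▸ ⟨rfl, by simp⟩, fun ⟨e, he⟩ => Out.ext e he⟩

theorem Out.cast_self {X : A} (h : X = X) (u : Out X) : Out.cast h u = u :=
  Out.cast_rfl u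

theorem Out.cast_id {X Y : A} (h : X = Y) : Out.cast h (Out.id X) = Out.id Y := by
  subst h; simp

theorem Out.cast_comp {X Y : A} (h : X = Y) (u : Out X) (v : Out u.1) :
    Out.cast h (u.comp v) = (Out.cast h u).comp v :=
  Out.ext rfl (by simp [Out.cast, Out.comp])

theorem mapOut_id (F : A ⥤ B) (X : A) : mapOut F (Out.id X) = Out.id (F.obj X) :=
  Out.ext rfl (by simp [mapOut, Out.id])

theorem mapOut_comp (F : A ⥤ B) {X : A} (u : Out X) (v : Out u.1) :
    mapOut F (u.comp v) = (mapOut F u).comp (mapOut F v) :=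
  Out.ext rfl (by simp [mapOut, Out.comp])

end Out

namespace DLens

variable {A : Type*} [Category A] {B : Type*} [Category B] {C : Type*} [Category C]

theorem ext {L M : DLens A B} (hget : L.get = M.get)
    (hput : ∀ (X : A) (u : Out (L.get.obj X)),
      L.put X u = M.put X (Out.cast (Functor.congr_obj hget X) u)) : L = M := by
  obtain ⟨get, put, _, _, _⟩ := L
  obtain ⟨get', put', _, _, _⟩ := M
  dsimp at hget
  subst hget
  obtain rfl : put = put' := funext fun X => funext fun u => by simpa using hput X u
  rfl

theorem congr_put {L M : DLens A B} (h : L = M) (X : A) (u : Out (L.get.obj X)) :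
    L.put X u = M.put X (Out.cast (Functor.congr_obj (congrArg DLens.get h) X) u) := by
  subst h; simp

def transport (F : DLens A B) {X Y : A} (e : F.get.obj X = F.get.obj Y) (a : Out X) : Out Y :=
  F.put Y (Out.cast e (mapOut F.get a))

theorem mapOut_transport (F : DLens A B) {X Y : A} (e : F.get.obj X = F.get.obj Y)
    (a : Out X) : mapOut F.get (F.transport e a) = Out.cast e (mapOut F.get a) :=
  F.putGet _ _

theorem transport_id (F : DLens A B) {X Y : A} (e : F.get.obj X = F.get.obj Y) :
    F.transport e (Out.id X) = Out.id Y := by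
  rw [transport, mapOut_id, Out.cast_id, F.putId]

theorem transport_comp (F : DLens A B) {X Y : A} (e : F.get.obj X = F.get.obj Y)
    (u : Out X) (v : Out u.1)
    (e' : F.get.obj u.1 = F.get.obj (F.transport e u).1) :
    F.transport e (u.comp v) = (F.transport e u).comp (F.transport e' v) := by
  calc F.transport e (u.comp v)
      = F.put Y ((Out.cast e (mapOut F.get u)).comp (mapOut F.get v)) := by
        rw [transport, mapOut_comp]
        exact congrArg (F.put Y) (Out.cast_comp e _ _)
    _ = _ := F.putPut Y _ _ e'

theorem transport_put (F : DLens A B) {X Y : A} (e : F.get.obj X = F.get.obj Y)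
    (u : Out (F.get.obj X)) : F.transport e (F.put X u) = F.put Y (Out.cast e u) := by
  rw [transport, F.putGet]

theorem put_mapOut_of_injective (F : DLens A B) {X : A}
    (hF : Function.Injective (mapOut F.get (X := X))) (v : Out X) :
    F.put X (mapOut F.get v) = v :=
  hF (F.putGet X _)

theorem cancel_right_of_mapOut_injective (F : DLens B C)
    (hF : ∀ X : B, Function.Injective (mapOut F.get (X := X))) {G H : DLens A B}
    (hget : G.get = H.get) (h : G.comp F = H.comp F) : G = H := by
  refine DLens.ext hget fun X v => ?_
  have eX := Functor.congr_obj hget X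
  calc G.put X v = (G.comp F).put X (mapOut F.get v) :=
        (congrArg (G.put X) (F.put_mapOut_of_injective (hF _) v)).symm
    _ = (H.comp F).put X (mapOut F.get (Out.cast eX v)) :=
        (congr_put h X _).trans (by rw [mapOut_cast]; rfl)
    _ = H.put X (Out.cast eX v) :=
        congrArg (H.put X) (F.put_mapOut_of_injective (hF _) _)

end DLens

structure KernelPair {A : Type*} [Category A] {B : Type*} [Category B] (G : A ⥤ B) where
  left : A
  right : A
  eq : G.obj left = G.obj right

namespace KernelPair

section Category

variable {A : Type*} [Category A] {B : Type*} [Category B] {G : A ⥤ B}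

@[ext]
structure Hom (c d : KernelPair G) where
  left : c.left ⟶ d.left
  right : c.right ⟶ d.right
  w : G.map left ≫ eqToHom d.eq = eqToHom c.eq ≫ G.map right

instance : Category (KernelPair G) where
  Hom := Hom
  id c := ⟨𝟙 c.left, 𝟙 c.right, by simp⟩
  comp f g := ⟨f.left ≫ g.left, f.right ≫ g.right, by
    rw [G.map_comp, G.map_comp, Category.assoc, g.w, reassoc_of% f.w]⟩
  id_comp f := Hom.ext (Category.id_comp f.left) (Category.id_comp f.right)
  comp_id f := Hom.ext (Category.comp_id f.left) (Category.comp_id f.right)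
  assoc f g h := Hom.ext (Category.assoc f.left g.left h.left)
    (Category.assoc f.right g.right h.right)

variable (G)

def fst : KernelPair G ⥤ A where
  obj c := c.left
  map f := f.left

def snd : KernelPair G ⥤ A where
  obj c := c.right
  map f := f.right

theorem fst_comp_eq_snd_comp : fst G ⋙ G = snd G ⋙ G :=
  CategoryTheory.Functor.ext (fun c => c.eq) fun c d f => by
    show G.map f.left = eqToHom c.eq ≫ G.map f.right ≫ eqToHom d.eq.symm
    simp [← reassoc_of% f.w]

def lift {D : Type*} [Category D] (P Q : D ⥤ A) (h : P ⋙ G = Q ⋙ G) : D ⥤ KernelPair G where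
  obj d := ⟨P.obj d, Q.obj d, Functor.congr_obj h d⟩
  map f := ⟨P.map f, Q.map f, by
    have hf := Functor.congr_hom h f
    simp only [Functor.comp_map] at hf
    simp [hf]⟩
  map_id d := Hom.ext (P.map_id d) (Q.map_id d)
  map_comp f g := Hom.ext (P.map_comp f g) (Q.map_comp f g)

theorem lift_fst {D : Type*} [Category D] (P Q : D ⥤ A) (h : P ⋙ G = Q ⋙ G) :
    lift G P Q h ⋙ fst G = P :=
  rfl

theorem lift_snd {D : Type*} [Category D] (P Q : D ⥤ A) (h : P ⋙ G = Q ⋙ G) :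
    lift G P Q h ⋙ snd G = Q :=
  rfl

theorem out_ext {c : KernelPair G} {u v : Out c} (h₁ : mapOut (fst G) u = mapOut (fst G) v)
    (h₂ : mapOut (snd G) u = mapOut (snd G) v) : u = v := by
  obtain ⟨⟨l, r, e⟩, ⟨fl, fr, w⟩⟩ := u
  obtain ⟨⟨l', r', e'⟩, ⟨fl', fr', w'⟩⟩ := v
  obtain ⟨rfl, hl⟩ := Sigma.mk.inj (show (⟨l, fl⟩ : Out c.left) = ⟨l', fl'⟩ from h₁)
  obtain ⟨rfl, hr⟩ := Sigma.mk.inj (show (⟨r, fr⟩ : Out c.right) = ⟨r', fr'⟩ from h₂)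
  cases eq_of_heq hl
  cases eq_of_heq hr
  rfl

def outMk {c : KernelPair G} (a₁ : Out c.left) (a₂ : Out c.right)
    (h : Out.cast c.eq (mapOut G a₁) = mapOut G a₂) : Out c :=
  ⟨⟨a₁.1, a₂.1, ((Out.cast_eq_iff _ _ _).1 h).fst⟩,
    ⟨a₁.2, a₂.2, ((Out.cast_eq_iff _ _ _).1 h).snd⟩⟩

theorem mapOut_injective_of_fst_eq_snd (h : fst G = snd G) (X : A) :
    Function.Injective (mapOut G (X := X)) := by
  intro u v huv
  obtain ⟨e, he⟩ := (Out.cast_eq_iff rfl _ _).1 (by simpa using huv)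
  let f : (⟨X, X, rfl⟩ : KernelPair G) ⟶ ⟨u.1, v.1, e⟩ := ⟨u.2, v.2, he⟩
  have htarget : u.1 = v.1 := Functor.congr_obj h (⟨u.1, v.1, e⟩ : KernelPair G)
  have hf : u.2 = eqToHom rfl ≫ v.2 ≫ eqToHom htarget.symm := Functor.congr_hom h f
  exact Out.ext htarget (by simp [hf])

end Category

section Lens

variable {A : Type*} [Category A] {B : Type*} [Category B] (F : DLens A B)

def fstLens : DLens (KernelPair F.get) A where
  get := fst F.get
  put c a := outMk F.get a (F.transport c.eq a) (F.mapOut_transport c.eq a).symm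
  putGet _ _ := rfl
  putId c := out_ext F.get rfl (F.transport_id c.eq)
  putPut c u v h := out_ext F.get
    (congrArg u.comp (Out.cast_self h v)).symm
    ((F.transport_comp c.eq u v _).trans
      (congrArg (F.transport c.eq u).comp (congrArg (F.transport _) (Out.cast_self h v).symm)))

def sndLens : DLens (KernelPair F.get) A where
  get := snd F.get
  put c (a : Out c.right) := outMk F.get (F.transport c.eq.symm a) a (by
    rw [F.mapOut_transport, Out.cast_cast, Out.cast_self])
  putGet _ _ := rfl
  putId c := out_ext F.get (F.transport_id c.eq.symm) rfl
  putPut c u v h := out_ext F.get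
    ((F.transport_comp c.eq.symm u v _).trans
      (congrArg (F.transport c.eq.symm u).comp (congrArg (F.transport _) (Out.cast_self h v).symm)))
    (congrArg u.comp (Out.cast_self h v)).symm

theorem condition : (fstLens F).comp F = (sndLens F).comp F :=
  DLens.ext (fst_comp_eq_snd_comp F.get) fun c (u : Out (F.get.obj c.left)) => out_ext F.get
    (show F.put c.left u = F.transport c.eq.symm (F.put c.right (Out.cast c.eq u)) by
      rw [F.transport_put, Out.cast_cast, Out.cast_self])
    (show F.transport c.eq (F.put c.left u) = F.put c.right (Out.cast c.eq u) by
      rw [F.transport_put])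

end Lens

section Cat

variable {A B : Cat.{v, w}} (G : A ⟶ B)

theorem mono_of_fst_eq_snd (h : fst G.toFunctor = snd G.toFunctor) : Mono G where
  right_cancellation P Q hPQ := by
    have hPQ' : P.toFunctor ⋙ G.toFunctor = Q.toFunctor ⋙ G.toFunctor :=
      congrArg Cat.Hom.toFunctor hPQ
    exact Cat.Hom.ext <| (lift_fst _ _ _ hPQ').symm.trans <|
      (congrArg (lift _ _ _ hPQ' ⋙ ·) h).trans (lift_snd _ _ _ hPQ')

theorem fst_eq_snd_of_mono [Mono G] : fst G.toFunctor = snd G.toFunctor :=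
  congrArg Cat.Hom.toFunctor <| (cancel_mono G).1 <|
    Cat.Hom.ext (C := Cat.of (KernelPair G.toFunctor)) (fst_comp_eq_snd_comp G.toFunctor)

end Cat

end KernelPair

end LensPaper

theorem lensForget_mono_iff (A B : LensCat.{u}) (F : A ⟶ B) :
    Mono F ↔ Mono (lensForget.map F) := by
  constructor
  · intro hF
    have hproj : KernelPair.fstLens F = KernelPair.sndLens F :=
      hF.right_cancellation (Z := LensCat.of (Cat.of (KernelPair F.get)))
        _ _ (KernelPair.condition F)
    exact KernelPair.mono_of_fst_eq_snd _ (congrArg DLens.get hproj)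
  · intro hF
    have hmapOut := KernelPair.mapOut_injective_of_fst_eq_snd _
      (KernelPair.fst_eq_snd_of_mono (lensForget.map F))
    refine ⟨fun G H h => DLens.cancel_right_of_mapOut_injective F hmapOut ?_ h⟩
    have hget := (cancel_mono (lensForget.map F)).1 (by simpa using congrArg lensForget.map h)
    exact congrArg Cat.Hom.toFunctor hget
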